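/- Let k ≥ 50 and let γ be the dominant root of x^k - 2x^{k-1} - ... - x - 1, and let φ = (1+√5)/2. If n is an integer with 1 < n < φ^{k/2}, then |(2γ - 2)γ^n - 2φ^{2n+1}| < 4φ^{2n}/φ^{k/2}. -/

import Mathlib

/-!
Multiplying the defining equation of `γ` by `γ - 1` gives `γ ^ (k - 1) * (γ ^ 2 - 3γ + 1) = -1`,
whose factorisation `(φ² - γ)(γ - φ⁻²)` shows that `γ` lies below `φ²` by at most `φ⁻ᵏ`.
The error `2φ · φ²ⁿ - (2γ - 2) γⁿ` splits as `2(γ - 1)(φ²ⁿ - γⁿ) + 2φ²ⁿ(φ² - γ)`; by the mean value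
bound `φ²ⁿ - γⁿ ≤ n φ²⁽ⁿ⁻¹⁾ (φ² - γ)` and `n < φ^(k/2)`, both terms are `O(φ²ⁿ / φ^(k/2))`.
-/

noncomputable def φ : ℝ := (1 + Real.sqrt 5) / 2

def IsDomRoot (k : ℕ) (γ : ℝ) : Prop :=
  1 < γ ∧ γ ^ k = 2 * γ ^ (k - 1) + ∑ i ∈ Finset.range (k - 1), γ ^ i

lemma φ_sq : φ ^ 2 = φ + 1 := Real.goldenRatio_sq

lemma one_lt_φ : 1 < φ := Real.one_lt_goldenRatio

lemma φ_lt_two : φ < 2 := Real.goldenRatio_lt_two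

lemma mul_pow_sub_pow_le {a b : ℝ} (hb : 0 ≤ b) (hba : b ≤ a) (n : ℕ) :
    a * (a ^ n - b ^ n) ≤ n * (a - b) * a ^ n := by
  induction n with
  | zero => simp
  | succ n ih =>
    have hpow : b ^ n ≤ a ^ n := pow_le_pow_left₀ hb hba n
    calc a * (a ^ (n + 1) - b ^ (n + 1))
        = a * (a * (a ^ n - b ^ n)) + a * b ^ n * (a - b) := by ring
      _ ≤ a * (n * (a - b) * a ^ n) + a * a ^ n * (a - b) := by
          gcongr <;> linarith
      _ = (n + 1 : ℕ) * (a - b) * a ^ (n + 1) := by push_cast; ring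

lemma abs_sub_mul_pow_lt {a b Q : ℝ} {n : ℕ} (hb : 1 < b) (hba : b ≤ a) (hQ : 1 ≤ Q)
    (hnQ : n < Q) (hgap : (a - b) * Q ^ 2 ≤ 1) :
    |(b - 1) * b ^ n - (a - 1) * a ^ n| < 2 * a ^ n / Q := by
  have ha : 0 < a := by linarith
  have hsplit : (a - 1) * a ^ n - (b - 1) * b ^ n
      = (b - 1) * (a ^ n - b ^ n) + a ^ n * (a - b) := by ring
  have hnonneg : 0 ≤ (a - 1) * a ^ n - (b - 1) * b ^ n := by
    have := sub_nonneg.2 (pow_le_pow_left₀ (by linarith) hba n)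
    have := sub_nonneg.2 hba
    rw [hsplit]
    positivity
  have hE : a * ((a - 1) * a ^ n - (b - 1) * b ^ n) ≤ ((b - 1) * n + a) * a ^ n * (a - b) := by
    have := mul_le_mul_of_nonneg_left (mul_pow_sub_pow_le (by linarith) hba n)
      (by linarith : 0 ≤ b - 1)
    rw [hsplit]
    linear_combination this
  have hcoef : (b - 1) * n + a < 2 * a * Q := by
    nlinarith [mul_lt_mul_of_pos_left hnQ (by linarith : 0 < b - 1)]
  rw [abs_sub_comm, abs_of_nonneg hnonneg, lt_div_iff₀ (by linarith)]
  refine lt_of_mul_lt_mul_left (a := a * Q) ?_ (by positivity)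
  calc a * Q * (((a - 1) * a ^ n - (b - 1) * b ^ n) * Q)
      = a * ((a - 1) * a ^ n - (b - 1) * b ^ n) * Q ^ 2 := by ring
    _ ≤ ((b - 1) * n + a) * a ^ n * ((a - b) * Q ^ 2) := by
        rw [← mul_assoc]; gcongr
    _ ≤ ((b - 1) * n + a) * a ^ n := mul_le_of_le_one_right (by positivity) hgap
    _ < 2 * a * Q * a ^ n := by gcongr
    _ = a * Q * (2 * a ^ n) := by ring

namespace IsDomRoot

variable {k : ℕ} {γ : ℝ}

lemma ne_zero (h : IsDomRoot k γ) : k ≠ 0 := by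
  rintro rfl
  simp [IsDomRoot] at h

lemma two_le (h : IsDomRoot k γ) : 2 ≤ γ := by
  obtain ⟨m, rfl⟩ := Nat.exists_eq_add_one_of_ne_zero h.ne_zero
  obtain ⟨h1, heq⟩ := h
  have hS : 0 ≤ ∑ i ∈ Finset.range m, γ ^ i :=
    Finset.sum_nonneg fun i _ => by positivity
  rw [Nat.add_sub_cancel, pow_succ] at heq
  exact le_of_mul_le_mul_left (by linarith) (pow_pos (by linarith) m)

/-- `φ ^ 2` and `2 - φ = φ⁻²` are the roots of `x ^ 2 - 3 * x + 1`. -/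
lemma gap_mul_eq_one (h : IsDomRoot k γ) : (φ ^ 2 - γ) * (γ ^ (k - 1) * (γ - (2 - φ))) = 1 := by
  obtain ⟨m, rfl⟩ := Nat.exists_eq_add_one_of_ne_zero h.ne_zero
  obtain ⟨-, heq⟩ := h
  rw [Nat.add_sub_cancel] at heq ⊢
  linear_combination γ ^ m * (γ + φ - 1) * φ_sq - (γ - 1) * heq - geom_sum_mul γ m

lemma lt_φ_sq (h : IsDomRoot k γ) : γ < φ ^ 2 := by
  have hX : 0 < γ ^ (k - 1) * (γ - (2 - φ)) :=
    mul_pos (pow_pos (by linarith [h.two_le]) _) (by linarith [h.two_le, one_lt_φ])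
  linarith [(pos_iff_pos_of_mul_pos (h.gap_mul_eq_one ▸ one_pos)).2 hX]

lemma gap_mul_pow_le_one (h : IsDomRoot k γ) : (φ ^ 2 - γ) * φ ^ k ≤ 1 := by
  have hγ := h.two_le
  have hφ := one_lt_φ
  have hφγ : φ ≤ γ := by linarith [φ_lt_two]
  have hk : φ ^ k ≤ γ ^ (k - 1) * (γ - (2 - φ)) := by
    obtain ⟨m, rfl⟩ := Nat.exists_eq_add_one_of_ne_zero h.ne_zero
    rw [pow_succ, Nat.add_sub_cancel]
    gcongr
    linarith
  calc (φ ^ 2 - γ) * φ ^ k ≤ (φ ^ 2 - γ) * (γ ^ (k - 1) * (γ - (2 - φ))) := by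
        gcongr; linarith [h.lt_φ_sq]
    _ = 1 := h.gap_mul_eq_one

end IsDomRoot

theorem dominant_root_pow_approx_general (k : ℕ) (γ : ℝ) (hγ : IsDomRoot k γ)
    (n : ℕ) (hnk : (n : ℝ) < φ ^ ((k : ℝ) / 2)) :
    |(2 * γ - 2) * γ ^ n - 2 * φ ^ (2 * n + 1)| < 4 * φ ^ (2 * n) / φ ^ ((k : ℝ) / 2) := by
  set Q := φ ^ ((k : ℝ) / 2)
  have hQsq : Q ^ 2 = φ ^ k := by
    rw [← Real.rpow_natCast, ← Real.rpow_mul (by linarith [one_lt_φ])]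
    norm_num
  have hQ : 1 ≤ Q := Real.one_le_rpow one_lt_φ.le (by positivity)
  have key := abs_sub_mul_pow_lt hγ.1 hγ.lt_φ_sq.le hQ hnk (hQsq ▸ hγ.gap_mul_pow_le_one)
  have hφ : (φ ^ 2 - 1) * (φ ^ 2) ^ n = φ ^ (2 * n + 1) := by
    rw [← pow_mul, pow_succ φ (2 * n), φ_sq]; ring
  calc |(2 * γ - 2) * γ ^ n - 2 * φ ^ (2 * n + 1)|
      = 2 * |(γ - 1) * γ ^ n - (φ ^ 2 - 1) * (φ ^ 2) ^ n| := by
        rw [hφ, ← abs_two, ← abs_mul, abs_two]; ring_nf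
    _ < 2 * (2 * (φ ^ 2) ^ n / Q) := by gcongr
    _ = 4 * φ ^ (2 * n) / Q := by rw [← pow_mul]; ring

theorem dominant_root_pow_approx (k : ℕ) (hk : 50 ≤ k) (γ : ℝ) (hγ : IsDomRoot k γ)
    (n : ℕ) (hn : 1 < n) (hnk : (n : ℝ) < φ ^ ((k : ℝ) / 2)) :
    |(2 * γ - 2) * γ ^ n - 2 * φ ^ (2 * n + 1)| < 4 * φ ^ (2 * n) / φ ^ ((k : ℝ) / 2) :=
  dominant_root_pow_approx_general k γ hγ n hnk
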